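/- (Proposition 6) Let P be a normal logic program over n atoms with m rules and (D, Q) its matricized form, let C be a set of k constraints with constraint matrix Q_c, and fix ℓ₂, ℓ₃, ℓ₄ > 0. For u ∈ ℝ^n define J_SU(u) = 0.5·(‖u − min₁(d)‖₂² + ℓ₂·‖u ⊙ (1 − u)‖₂²) with d = D(1 − min₁(Q(1 − u^δ))), J_c(u) = Σ_{c ∈ Fin k} (1 − min₁((Q_c(1 − u^δ))(c))), J_LF(u) = Σ_{s=1}^t (1 − min₁(A_s)) where L₁,…,L_t enumerate all loops of P, M = 1 − min₁(Q(1 − u^δ)) and A_s = Σ_{i ∈ L_s}(1 − u(i)) + Σ_{j support rule for L_s} M(j), and J_{SU+c+LF}(u) = J_SU(u) + ℓ₃·J_c(u) + ℓ₄·J_LF(u). Then J_{SU+c+LF}(u) = 0 if and only if u ∈ {0,1}^n and the model I = {i | u(i) = 1} is a stable model of P satisfying every constraint of C. -/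

import Mathlib

/-!
On a 0/1 vector `u = u_I` every quantity in the cost is a natural-number count, so each term
vanishes exactly when a logical condition on `I` holds: `J_SU` forces `u` to be binary and
`u = min₁(d)`, i.e. `I` supported; `J_c` forces the constraints, and the loop term the loop
formulas of all loops. These conditions characterise stable models (Lin–Zhao): if a supported
model `I` were not stable, the atoms of `I` outside the least model of `P^I` would each have an
edge of `pdg(P)` back into that set, so it would contain a terminal strongly connected
component, which is a loop whose loop formula fails.
-/

open Finset Matrix

noncomputable section

/-- componentwise `x ↦ min x 1` -/
def min1 {k : Type*} (v : k → ℝ) : k → ℝ := fun j => min (v j) 1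

/-- the vectorized model `u_I ∈ {0,1}^n` of a model `I` -/
def vecI {n : ℕ} (I : Finset (Fin n)) : Fin n → ℝ := fun i => if i ∈ I then 1 else 0

/-- the dualized vector `u^δ = [u ; 1-u] ∈ ℝ^{2n}` -/
def dvec {n : ℕ} (u : Fin n → ℝ) : Fin n ⊕ Fin n → ℝ := Sum.elim u fun i => 1 - u i

/-- the matrix `D ∈ ℝ^{n×m}` of the matricized program: `D(i,j) = 1` iff `h j = i` -/
def Dmat {n m : ℕ} (hd : Fin m → Fin n) : Matrix (Fin n) (Fin m) ℝ :=
  Matrix.of fun i j => if hd j = i then 1 else 0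

/-- the matrix `Q = [Q¹ Q²] ∈ ℝ^{m×2n}` of the matricized program -/
def Qmat {n m : ℕ} (pos neg : Fin m → Finset (Fin n)) :
    Matrix (Fin m) (Fin n ⊕ Fin n) ℝ :=
  Matrix.of fun j => Sum.elim (fun i => if i ∈ pos j then (1 : ℝ) else 0)
    (fun i => if i ∈ neg j then (1 : ℝ) else 0)

/-- a half of the matrix `Q`: `Qhalf pos = Q¹`, `Qhalf neg = Q²` -/
def Qhalf {n m : ℕ} (b : Fin m → Finset (Fin n)) : Matrix (Fin m) (Fin n) ℝ :=
  Matrix.of fun j i => if i ∈ b j then 1 else 0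

/-- `I` satisfies the body of rule `j` -/
def bodyTrue {n m : ℕ} (pos neg : Fin m → Finset (Fin n)) (I : Finset (Fin n))
    (j : Fin m) : Prop :=
  pos j ⊆ I ∧ neg j ∩ I = ∅

instance {n m : ℕ} (pos neg : Fin m → Finset (Fin n)) (I : Finset (Fin n)) :
    DecidablePred (bodyTrue pos neg I) := fun j =>
  inferInstanceAs (Decidable (pos j ⊆ I ∧ neg j ∩ I = ∅))

/-- `I` is a supported model of the program -/
def isSupported {n m : ℕ} (hd : Fin m → Fin n) (pos neg : Fin m → Finset (Fin n))
    (I : Finset (Fin n)) : Prop :=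
  ∀ i, i ∈ I ↔ ∃ j, hd j = i ∧ bodyTrue pos neg I j

/-- the Euclidean norm `‖·‖₂` on `ℝ^k` -/
def euclidNorm {k : Type*} [Fintype k] (v : k → ℝ) : ℝ := Real.sqrt (∑ i, v i ^ 2)

/-- the vector `d = D(1 - min₁(Q(1 - u^δ)))` -/
def dvecOf {n m : ℕ} (hd : Fin m → Fin n) (pos neg : Fin m → Finset (Fin n))
    (u : Fin n → ℝ) : Fin n → ℝ :=
  (Dmat hd).mulVec fun j => 1 - min1 ((Qmat pos neg).mulVec fun x => 1 - dvec u x) j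

open scoped Classical in
/-- the least model of the definite program whose rules are `hd j ← ps j`
for exactly those `j` with `act j`: the smallest set `J` of atoms such that
for every such rule, `ps j ⊆ J` implies `hd j ∈ J`. -/
def LMFor {n m : ℕ} (hd : Fin m → Fin n) (ps : Fin m → Finset (Fin n))
    (act : Fin m → Prop) : Finset (Fin n) :=
  Finset.univ.filter fun a =>
    ∀ J : Finset (Fin n), (∀ j, act j → ps j ⊆ J → hd j ∈ J) → a ∈ J

/-- `I` is a stable model: the least model of the Gelfond–Lifschitz reduct `P^I` equals `I` -/
def isStable {n m : ℕ} (hd : Fin m → Fin n) (pos neg : Fin m → Finset (Fin n))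
    (I : Finset (Fin n)) : Prop :=
  LMFor hd pos (fun j => neg j ∩ I = ∅) = I

/-- edge of the positive dependency graph `pdg(P)` -/
def pdgEdge {n m : ℕ} (hd : Fin m → Fin n) (pos : Fin m → Finset (Fin n))
    (a b : Fin n) : Prop :=
  ∃ j, hd j = a ∧ b ∈ pos j

/-- `L` is a loop of the program: a nonempty set of atoms such that between any two of
its atoms there are (nonempty) directed paths in `pdg(P)` in both directions, where a
singleton `L = {a}` requires the edge `(a,a)` -/
def isLoop {n m : ℕ} (hd : Fin m → Fin n) (pos : Fin m → Finset (Fin n))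
    (L : Finset (Fin n)) : Prop :=
  L.Nonempty ∧ (∀ a₁ ∈ L, ∀ a₂ ∈ L, Relation.TransGen (pdgEdge hd pos) a₁ a₂) ∧
    (∀ a, L = {a} → pdgEdge hd pos a a)

/-- rule `j` is a support rule for the loop `L` -/
def isSupportRule {n m : ℕ} (hd : Fin m → Fin n) (pos : Fin m → Finset (Fin n))
    (L : Finset (Fin n)) (j : Fin m) : Prop :=
  hd j ∈ L ∧ pos j ∩ L = ∅

instance {n m : ℕ} (hd : Fin m → Fin n) (pos : Fin m → Finset (Fin n))
    (L : Finset (Fin n)) : DecidablePred (isSupportRule hd pos L) := fun j =>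
  inferInstanceAs (Decidable (hd j ∈ L ∧ pos j ∩ L = ∅))

/-- `I` satisfies the loop formula `LF(L)` -/
def satLF {n m : ℕ} (hd : Fin m → Fin n) (pos neg : Fin m → Finset (Fin n))
    (I : Finset (Fin n)) (L : Finset (Fin n)) : Prop :=
  L ⊆ I → ∃ j, isSupportRule hd pos L j ∧ bodyTrue pos neg I j

/-- `M = 1 - min₁(Q(1 - u^δ))` : the (continuous) truth values of the rule bodies -/
def Mvec {n m : ℕ} (pos neg : Fin m → Finset (Fin n)) (u : Fin n → ℝ) : Fin m → ℝ :=
  fun j => 1 - min1 ((Qmat pos neg).mulVec fun x => 1 - dvec u x) j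

/-- `A_L = Σ_{i ∈ L}(1 - u(i)) + Σ_{j support rule for L} M(j)` -/
def Aval {n m : ℕ} (hd : Fin m → Fin n) (pos neg : Fin m → Finset (Fin n))
    (u : Fin n → ℝ) (L : Finset (Fin n)) : ℝ :=
  (∑ i ∈ L, (1 - u i)) +
    ∑ j ∈ Finset.univ.filter (isSupportRule hd pos L), Mvec pos neg u j

/-- the cost function `J_SU` -/
def JSU {n m : ℕ} (hd : Fin m → Fin n) (pos neg : Fin m → Finset (Fin n)) (ℓ₂ : ℝ)
    (u : Fin n → ℝ) : ℝ :=
  0.5 * (euclidNorm (fun i => u i - min1 (dvecOf hd pos neg u) i) ^ 2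
    + ℓ₂ * euclidNorm (fun i => u i * (1 - u i)) ^ 2)

/-- the constraint cost `J_c(u) = Σ_c (1 - min₁((Q_c(1 - u^δ))(c)))` -/
def Jc {n k : ℕ} (cpos cneg : Fin k → Finset (Fin n)) (u : Fin n → ℝ) : ℝ :=
  ∑ c, (1 - min1 ((Qmat cpos cneg).mulVec fun x => 1 - dvec u x) c)

theorem exists_terminal_strongComponent {α : Type*} (r : α → α → Prop) {E : Finset α}
    (hE : E.Nonempty) (hout : ∀ a ∈ E, ∃ b ∈ E, r a b) :
    ∃ L ⊆ E, L.Nonempty ∧ (∀ a ∈ L, ∀ b ∈ L, Relation.TransGen r a b) ∧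
      ∀ a ∈ L, ∀ b ∈ E, r a b → b ∈ L := by
  classical
  let reach : α → Finset α := fun a =>
    E.filter (Relation.TransGen (fun x y => r x y ∧ y ∈ E) a)
  -- by minimality of `#(reach a₀)`, everything reachable from `a₀` reaches all of `reach a₀`
  obtain ⟨a₀, ha₀, hmin⟩ := E.exists_min_image (fun a => #(reach a)) hE
  have reach_eq : ∀ b ∈ reach a₀, reach b = reach a₀ := fun b hb =>
    Finset.eq_of_subset_of_card_le
      (Finset.monotone_filter_right _ fun _ _ hc => (Finset.mem_filter.1 hb).2.trans hc)
      (hmin b (Finset.mem_filter.1 hb).1)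
  have step : ∀ a b, b ∈ E → r a b → b ∈ reach a := fun a b hb hab =>
    Finset.mem_filter.2 ⟨hb, .single ⟨hab, hb⟩⟩
  refine ⟨reach a₀, Finset.filter_subset _ _, ?_, fun a ha b hb => ?_,
    fun a ha b hb hab => ?_⟩
  · obtain ⟨b, hb, hab⟩ := hout a₀ ha₀
    exact ⟨b, step a₀ b hb hab⟩
  · rw [← reach_eq a ha] at hb
    exact Relation.TransGen.mono (fun _ _ h => h.1) _ _ (Finset.mem_filter.1 hb).2
  · exact reach_eq a ha ▸ step a b hb hab

section LeastModel

variable {n m : ℕ} {hd : Fin m → Fin n} {ps : Fin m → Finset (Fin n)} {act : Fin m → Prop}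

theorem mem_LMFor {a : Fin n} :
    a ∈ LMFor hd ps act ↔
      ∀ J : Finset (Fin n), (∀ j, act j → ps j ⊆ J → hd j ∈ J) → a ∈ J := by
  simp [LMFor]

theorem LMFor_subset {J : Finset (Fin n)} (hJ : ∀ j, act j → ps j ⊆ J → hd j ∈ J) :
    LMFor hd ps act ⊆ J :=
  fun _ ha => mem_LMFor.1 ha J hJ

theorem LMFor_closed {j : Fin m} (hj : act j) (hsub : ps j ⊆ LMFor hd ps act) :
    hd j ∈ LMFor hd ps act :=
  mem_LMFor.2 fun _ hJ => hJ j hj (hsub.trans (LMFor_subset hJ))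

end LeastModel

section StableModels

variable {n m : ℕ} {hd : Fin m → Fin n} {pos neg : Fin m → Finset (Fin n)}
  {I : Finset (Fin n)}

/-- `J` is a model of the reduct `P^I`. -/
def IsReductModel (hd : Fin m → Fin n) (pos neg : Fin m → Finset (Fin n))
    (I J : Finset (Fin n)) : Prop :=
  ∀ j, neg j ∩ I = ∅ → pos j ⊆ J → hd j ∈ J

theorem isReductModel_of_isStable (h : isStable hd pos neg I) :
    IsReductModel hd pos neg I I := by
  intro j hj hsub
  rw [← h] at hsub ⊢
  exact LMFor_closed hj hsub

theorem isReductModel_of_isSupported (h : isSupported hd pos neg I) :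
    IsReductModel hd pos neg I I :=
  fun j hj hsub => (h (hd j)).2 ⟨j, rfl, hsub, hj⟩

theorem exists_supportRule_of_isStable (h : isStable hd pos neg I) {L : Finset (Fin n)}
    (hL : L.Nonempty) (hLI : L ⊆ I) :
    ∃ j, isSupportRule hd pos L j ∧ bodyTrue pos neg I j := by
  -- otherwise `I \ L` is a model of `P^I` smaller than its least model `I`
  by_contra! hno
  have hmodel : IsReductModel hd pos neg I (I \ L) := by
    intro j hj hsub
    obtain ⟨hposI, hposL⟩ := Finset.subset_sdiff.1 hsub
    refine Finset.mem_sdiff.2 ⟨isReductModel_of_isStable h j hj hposI, fun hjL => ?_⟩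
    exact hno j ⟨hjL, Finset.disjoint_iff_inter_eq_empty.1 hposL⟩ ⟨hposI, hj⟩
  obtain ⟨a, ha⟩ := hL
  exact (Finset.mem_sdiff.1 (LMFor_subset hmodel (h.symm ▸ hLI ha))).2 ha

theorem isSupported_of_isStable (h : isStable hd pos neg I) : isSupported hd pos neg I := by
  refine fun i => ⟨fun hi => ?_, fun ⟨j, hj, hpos, hneg⟩ =>
    hj ▸ isReductModel_of_isStable h j hneg hpos⟩
  obtain ⟨j, ⟨hj, -⟩, hbody⟩ := exists_supportRule_of_isStable h (Finset.singleton_nonempty i)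
    (Finset.singleton_subset_iff.2 hi)
  exact ⟨j, Finset.mem_singleton.1 hj, hbody⟩

theorem exists_pdgEdge_of_mem_sdiff_LMFor (h : isSupported hd pos neg I) {a : Fin n}
    (ha : a ∈ I \ LMFor hd pos fun j => neg j ∩ I = ∅) :
    ∃ b ∈ I \ LMFor hd pos (fun j => neg j ∩ I = ∅), pdgEdge hd pos a b := by
  obtain ⟨haI, haLM⟩ := Finset.mem_sdiff.1 ha
  obtain ⟨j, rfl, hposI, hnegI⟩ := (h a).1 haI
  obtain ⟨b, hbpos, hbLM⟩ := Finset.not_subset.1 fun hsub => haLM (LMFor_closed hnegI hsub)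
  exact ⟨b, Finset.mem_sdiff.2 ⟨hposI hbpos, hbLM⟩, j, rfl, hbpos⟩

theorem isStable_of_isSupported (h : isSupported hd pos neg I)
    (hlf : ∀ L, isLoop hd pos L → satLF hd pos neg I L) : isStable hd pos neg I := by
  set LM := LMFor hd pos fun j => neg j ∩ I = ∅
  refine Finset.Subset.antisymm (LMFor_subset (isReductModel_of_isSupported h)) fun a haI => ?_
  by_contra haLM
  obtain ⟨L, hLE, hLne, hLconn, hLclosed⟩ := exists_terminal_strongComponent (pdgEdge hd pos)
    ⟨a, Finset.mem_sdiff.2 ⟨haI, haLM⟩⟩ fun _ => exists_pdgEdge_of_mem_sdiff_LMFor h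
  have hloop : isLoop hd pos L := by
    refine ⟨hLne, hLconn, fun b hLb => ?_⟩
    have hbL : b ∈ L := hLb ▸ Finset.mem_singleton_self b
    obtain ⟨c, hcE, hbc⟩ := exists_pdgEdge_of_mem_sdiff_LMFor h (hLE hbL)
    have hcb : c ∈ ({b} : Finset (Fin n)) := hLb ▸ hLclosed b hbL c hcE hbc
    rwa [Finset.mem_singleton.1 hcb] at hbc
  obtain ⟨j, ⟨hjL, hposL⟩, hposI, hnegI⟩ :=
    hlf L hloop fun b hb => (Finset.mem_sdiff.1 (hLE hb)).1
  have hposLM : pos j ⊆ LM := fun b hb => by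
    by_contra hbLM
    have hbL := hLclosed _ hjL b (Finset.mem_sdiff.2 ⟨hposI hb, hbLM⟩) ⟨j, rfl, hb⟩
    exact Finset.notMem_empty b (hposL ▸ Finset.mem_inter.2 ⟨hb, hbL⟩)
  exact (Finset.mem_sdiff.1 (hLE hjL)).2 (LMFor_closed hnegI hposLM)

theorem isStable_iff_isSupported_and_satLF :
    isStable hd pos neg I ↔
      isSupported hd pos neg I ∧ ∀ L, isLoop hd pos L → satLF hd pos neg I L :=
  ⟨fun h => ⟨isSupported_of_isStable h, fun _ hL => exists_supportRule_of_isStable h hL.1⟩,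
    fun h => isStable_of_isSupported h.1 h.2⟩

end StableModels

section VectorizedModels

variable {n m : ℕ} {I : Finset (Fin n)}

theorem min_natCast_one (N : ℕ) : min (N : ℝ) 1 = if N = 0 then 0 else 1 := by
  split_ifs with h
  · simp [h]
  · exact min_eq_right (Nat.one_le_cast.2 (Nat.one_le_iff_ne_zero.2 h))

theorem eq_vecI_filter_eq_one {u : Fin n → ℝ} (hu : ∀ i, u i = 0 ∨ u i = 1) :
    u = vecI {i | u i = 1} := by
  funext i
  rcases hu i with h | h <;> simp [vecI, h]

theorem filter_vecI_eq_one : ({i | vecI I i = 1} : Finset (Fin n)) = I := by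
  ext i
  by_cases h : i ∈ I <;> simp [vecI, h]

theorem sum_vecI (s : Finset (Fin n)) : ∑ i ∈ s, vecI I i = #(s ∩ I) := by
  simp [vecI]

theorem sum_one_sub_vecI (s : Finset (Fin n)) : ∑ i ∈ s, (1 - vecI I i) = #(s \ I) := by
  rw [Finset.sum_sub_distrib, sum_vecI, Finset.sum_const,
    ← Finset.card_sdiff_add_card_inter s I]
  ring

theorem Qmat_mulVec_vecI (pos neg : Fin m → Finset (Fin n)) (j : Fin m) :
    (Qmat pos neg *ᵥ fun x => 1 - dvec (vecI I) x) j =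
      ((#(pos j \ I) + #(neg j ∩ I) : ℕ) : ℝ) := by
  simp only [mulVec, dotProduct, Qmat, of_apply, Fintype.sum_sum_type, Sum.elim_inl,
    Sum.elim_inr, dvec, ite_mul, one_mul, zero_mul, sub_sub_cancel, Finset.sum_ite_mem,
    Finset.univ_inter, sum_vecI, sum_one_sub_vecI]
  push_cast
  rfl

theorem bodyTrue_iff_card_add_card_eq_zero (pos neg : Fin m → Finset (Fin n)) (j : Fin m) :
    bodyTrue pos neg I j ↔ #(pos j \ I) + #(neg j ∩ I) = 0 := by
  simp [bodyTrue, Finset.sdiff_eq_empty_iff_subset]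

theorem one_le_Qmat_mulVec_vecI_iff (pos neg : Fin m → Finset (Fin n)) (j : Fin m) :
    1 ≤ (Qmat pos neg *ᵥ fun x => 1 - dvec (vecI I) x) j ↔ ¬ bodyTrue pos neg I j := by
  rw [Qmat_mulVec_vecI, Nat.one_le_cast, Nat.one_le_iff_ne_zero,
    bodyTrue_iff_card_add_card_eq_zero]

theorem Mvec_vecI (pos neg : Fin m → Finset (Fin n)) (j : Fin m) :
    Mvec pos neg (vecI I) j = if bodyTrue pos neg I j then 1 else 0 := by
  simp only [Mvec, min1, Qmat_mulVec_vecI, min_natCast_one,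
    ← bodyTrue_iff_card_add_card_eq_zero]
  split_ifs <;> norm_num

theorem dvecOf_vecI (hd : Fin m → Fin n) (pos neg : Fin m → Finset (Fin n)) (i : Fin n) :
    dvecOf hd pos neg (vecI I) i = #{j | hd j = i ∧ bodyTrue pos neg I j} := by
  change (Dmat hd *ᵥ Mvec pos neg (vecI I)) i = _
  simp only [mulVec, dotProduct, Dmat, of_apply, Mvec_vecI, ite_zero_mul_ite_zero, mul_one,
    Finset.sum_boole]

theorem vecI_eq_min1_dvecOf_iff (hd : Fin m → Fin n) (pos neg : Fin m → Finset (Fin n)) :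
    vecI I = min1 (dvecOf hd pos neg (vecI I)) ↔ isSupported hd pos neg I := by
  refine funext_iff.trans (forall_congr' fun i => ?_)
  simp only [min1, dvecOf_vecI, min_natCast_one, vecI, Finset.card_eq_zero,
    Finset.filter_eq_empty_iff]
  by_cases hi : i ∈ I <;> by_cases hj : ∃ j, hd j = i ∧ bodyTrue pos neg I j <;> simp_all

theorem one_le_Aval_vecI_iff (hd : Fin m → Fin n) (pos neg : Fin m → Finset (Fin n))
    (L : Finset (Fin n)) : 1 ≤ Aval hd pos neg (vecI I) L ↔ satLF hd pos neg I L := by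
  rw [Aval, sum_one_sub_vecI]
  simp only [Mvec_vecI, Finset.sum_boole, Finset.filter_filter]
  norm_cast
  simp [Nat.one_le_iff_ne_zero, satLF, imp_iff_not_or, Finset.sdiff_eq_empty_iff_subset,
    Finset.filter_eq_empty_iff]

end VectorizedModels

section CostFunctions

variable {ι : Type*} [Fintype ι]

theorem euclidNorm_eq_zero_iff {v : ι → ℝ} : euclidNorm v = 0 ↔ v = 0 := by
  rw [euclidNorm, Real.sqrt_eq_zero (Finset.sum_nonneg fun i _ => sq_nonneg (v i)),
    Finset.sum_eq_zero_iff_of_nonneg fun i _ => sq_nonneg (v i), funext_iff]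
  simp

theorem sum_one_sub_min_one_nonneg (a : ι → ℝ) : 0 ≤ ∑ i, (1 - min (a i) 1) :=
  Finset.sum_nonneg fun _ _ => sub_nonneg.2 (min_le_right _ _)

theorem sum_one_sub_min_one_eq_zero_iff (a : ι → ℝ) :
    ∑ i, (1 - min (a i) 1) = 0 ↔ ∀ i, 1 ≤ a i := by
  rw [Finset.sum_eq_zero_iff_of_nonneg fun _ _ => sub_nonneg.2 (min_le_right _ _)]
  simp only [Finset.mem_univ, true_implies, sub_eq_zero, eq_comm (a := (1 : ℝ)),
    min_eq_right_iff]

variable {n m k : ℕ} {hd : Fin m → Fin n} {pos neg : Fin m → Finset (Fin n)} {ℓ₂ : ℝ}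
  {u : Fin n → ℝ}

theorem JSU_nonneg (hℓ₂ : 0 ≤ ℓ₂) : 0 ≤ JSU hd pos neg ℓ₂ u := by
  unfold JSU
  positivity

theorem JSU_eq_zero_iff (hℓ₂ : 0 < ℓ₂) :
    JSU hd pos neg ℓ₂ u = 0 ↔
      (∀ i, u i = 0 ∨ u i = 1) ∧ u = min1 (dvecOf hd pos neg u) := by
  rw [JSU, mul_eq_zero, or_iff_right (by norm_num),
    add_eq_zero_iff_of_nonneg (by positivity) (by positivity), mul_eq_zero,
    pow_eq_zero_iff two_ne_zero, pow_eq_zero_iff two_ne_zero, euclidNorm_eq_zero_iff,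
    euclidNorm_eq_zero_iff]
  simp only [funext_iff, Pi.zero_apply, sub_eq_zero, mul_eq_zero, eq_comm (a := (1 : ℝ)),
    hℓ₂.ne', false_or]
  exact and_comm

theorem Jc_nonneg (cpos cneg : Fin k → Finset (Fin n)) : 0 ≤ Jc cpos cneg u :=
  sum_one_sub_min_one_nonneg _

theorem Jc_eq_zero_iff (cpos cneg : Fin k → Finset (Fin n)) :
    Jc cpos cneg u = 0 ↔ ∀ c, 1 ≤ (Qmat cpos cneg *ᵥ fun x => 1 - dvec u x) c :=
  sum_one_sub_min_one_eq_zero_iff _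

theorem cost_eq_zero_iff (cpos cneg : Fin k → Finset (Fin n)) {ℓ₃ ℓ₄ : ℝ} (hℓ₂ : 0 < ℓ₂)
    (hℓ₃ : 0 < ℓ₃) (hℓ₄ : 0 < ℓ₄) (Ls : ι → Finset (Fin n)) :
    JSU hd pos neg ℓ₂ u + ℓ₃ * Jc cpos cneg u
        + ℓ₄ * (∑ s, (1 - min (Aval hd pos neg u (Ls s)) 1)) = 0 ↔
      (∀ i, u i = 0 ∨ u i = 1) ∧ u = min1 (dvecOf hd pos neg u) ∧
        (∀ c, 1 ≤ (Qmat cpos cneg *ᵥ fun x => 1 - dvec u x) c) ∧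
        ∀ s, 1 ≤ Aval hd pos neg u (Ls s) := by
  have hJSU := JSU_nonneg (hd := hd) (pos := pos) (neg := neg) (u := u) hℓ₂.le
  have hJc := mul_nonneg hℓ₃.le (Jc_nonneg (u := u) cpos cneg)
  rw [add_eq_zero_iff_of_nonneg (add_nonneg hJSU hJc)
      (mul_nonneg hℓ₄.le (sum_one_sub_min_one_nonneg _)),
    add_eq_zero_iff_of_nonneg hJSU hJc, mul_eq_zero, mul_eq_zero, JSU_eq_zero_iff hℓ₂,
    Jc_eq_zero_iff, sum_one_sub_min_one_eq_zero_iff]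
  simp only [hℓ₃.ne', hℓ₄.ne', false_or, and_assoc]

end CostFunctions

theorem stmt10_general {n m k : ℕ} (hd : Fin m → Fin n) (pos neg : Fin m → Finset (Fin n))
    (cpos cneg : Fin k → Finset (Fin n)) (ℓ₂ ℓ₃ ℓ₄ : ℝ)
    (hℓ₂ : 0 < ℓ₂) (hℓ₃ : 0 < ℓ₃) (hℓ₄ : 0 < ℓ₄)
    (t : ℕ) (Ls : Fin t → Finset (Fin n))
    (henum : ∀ L, isLoop hd pos L ↔ ∃ s, Ls s = L) (u : Fin n → ℝ) :
    JSU hd pos neg ℓ₂ u + ℓ₃ * Jc cpos cneg u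
        + ℓ₄ * (∑ s, (1 - min (Aval hd pos neg u (Ls s)) 1)) = 0 ↔
      (∀ i, u i = 0 ∨ u i = 1) ∧
        isStable hd pos neg (Finset.univ.filter fun i => u i = 1) ∧
        ∀ c, ¬ bodyTrue cpos cneg (Finset.univ.filter fun i => u i = 1) c := by
  rw [cost_eq_zero_iff cpos cneg hℓ₂ hℓ₃ hℓ₄]
  refine and_congr_right fun hu => ?_
  obtain ⟨I, rfl⟩ : ∃ I, u = vecI I := ⟨_, eq_vecI_filter_eq_one hu⟩
  simp only [filter_vecI_eq_one, isStable_iff_isSupported_and_satLF, henum, forall_exists_index,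
    forall_apply_eq_imp_iff, vecI_eq_min1_dvecOf_iff, one_le_Qmat_mulVec_vecI_iff,
    one_le_Aval_vecI_iff, and_assoc]
  exact and_congr_right' and_comm

/-- Proposition 6: for `ℓ₂, ℓ₃, ℓ₄ > 0` and `L₁, …, L_t` enumerating all
loops of `P`, `J_{SU+c+LF}(u) = J_SU(u) + ℓ₃·J_c(u) + ℓ₄·J_LF(u) = 0` iff `u ∈ {0,1}^n`
and `I = {i | u(i) = 1}` is a stable model of `P` satisfying every constraint of `C`. -/
theorem stmt10 {n m k : ℕ} (hd : Fin m → Fin n) (pos neg : Fin m → Finset (Fin n))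
    (cpos cneg : Fin k → Finset (Fin n)) (ℓ₂ ℓ₃ ℓ₄ : ℝ)
    (hℓ₂ : 0 < ℓ₂) (hℓ₃ : 0 < ℓ₃) (hℓ₄ : 0 < ℓ₄)
    (t : ℕ) (Ls : Fin t → Finset (Fin n)) (hinj : Function.Injective Ls)
    (henum : ∀ L, isLoop hd pos L ↔ ∃ s, Ls s = L) (u : Fin n → ℝ) :
    JSU hd pos neg ℓ₂ u + ℓ₃ * Jc cpos cneg u
        + ℓ₄ * (∑ s, (1 - min (Aval hd pos neg u (Ls s)) 1)) = 0 ↔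
      (∀ i, u i = 0 ∨ u i = 1) ∧
        isStable hd pos neg (Finset.univ.filter fun i => u i = 1) ∧
        ∀ c, ¬ bodyTrue cpos cneg (Finset.univ.filter fun i => u i = 1) c :=
  stmt10_general hd pos neg cpos cneg ℓ₂ ℓ₃ ℓ₄ hℓ₂ hℓ₃ hℓ₄ t Ls henum u
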